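/- Let $n \geq 2$ and $k_0 \geq 2$ with $k_0/2$ a positive integer, $c > 0$, and suppose $u$ is smooth near $0$ with $(1 + k_0 x u'(x))^{n-1}(u'(x) + x u''(x)) = c$. Then $h_2(u) := \frac{1}{2}(u'(0)^2 + u''(0)) \leq 0$, with equality if and only if $n = 2$ and $k_0 = 2$. -/

import Mathlib

/-- if `n ≥ 2`, `k₀/2` is a positive integer, `c > 0` and `u` is smooth near `0`
satisfying Calabi's ODE near `0`, then `h₂(u) = (u'(0)² + u''(0))/2 ≤ 0`, with equality
iff `n = 2` and `k₀ = 2`. -/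
theorem calabi_h2_nonpos (n : ℕ) (hn : 2 ≤ n) (k₀ c : ℝ)
    (hk : ∃ m : ℕ, 0 < m ∧ k₀ = 2 * m) (hc : 0 < c)
    (u : ℝ → ℝ) (hu : ∀ᶠ x in nhds (0 : ℝ), ContDiffAt ℝ (⊤ : ℕ∞) u x)
    (hode : ∀ᶠ x in nhds (0 : ℝ),
      (1 + k₀ * x * deriv u x) ^ (n - 1) * (deriv u x + x * iteratedDeriv 2 u x) = c) :
    (1 / 2) * ((deriv u 0) ^ 2 + iteratedDeriv 2 u 0) ≤ 0 ∧
      ((1 / 2) * ((deriv u 0) ^ 2 + iteratedDeriv 2 u 0) = 0 ↔ n = 2 ∧ k₀ = 2) := by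
  obtain ⟨s, hs, hsopen, hs0⟩ := eventually_nhds_iff.mp hu
  have hcd : ContDiffOn ℝ (⊤ : ℕ∞) u s := fun x hx => (hs x hx).contDiffWithinAt
  have hv : ContDiffOn ℝ (⊤ : ℕ∞) (deriv u) s := hcd.deriv_of_isOpen hsopen (by simp)
  have hw : ContDiffOn ℝ (⊤ : ℕ∞) (deriv (deriv u)) s := hv.deriv_of_isOpen hsopen (by simp)
  have h2 : iteratedDeriv 2 u = deriv (deriv u) := by
    rw [iteratedDeriv_succ, iteratedDeriv_one]
  have hvd : DifferentiableAt ℝ (deriv u) 0 :=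
    (hv.contDiffAt (hsopen.mem_nhds hs0)).differentiableAt (by simp)
  have hwd : DifferentiableAt ℝ (deriv (deriv u)) 0 :=
    (hw.contDiffAt (hsopen.mem_nhds hs0)).differentiableAt (by simp)
  -- value at 0 : deriv u 0 = c
  have h0 := hode.self_of_nhds
  simp only [mul_zero, zero_mul, add_zero, one_pow, one_mul] at h0
  -- rewrite the ODE function with convenient associativity
  have hode' : (fun x => (1 + k₀ * (x * deriv u x)) ^ (n - 1) *
      (deriv u x + x * deriv (deriv u) x)) =ᶠ[nhds (0 : ℝ)] fun _ => c := by
    filter_upwards [hode] with x hx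
    rw [← h2, ← mul_assoc]
    exact hx
  -- derivative of the (locally constant) left-hand side at 0
  have hA : HasDerivAt (fun x : ℝ => 1 + k₀ * (x * deriv u x))
      (k₀ * (1 * deriv u 0 + 0 * deriv (deriv u) 0)) 0 :=
    (((hasDerivAt_id (0:ℝ)).mul hvd.hasDerivAt).const_mul k₀).const_add 1
  have hApow : HasDerivAt (fun x : ℝ => (1 + k₀ * (x * deriv u x)) ^ (n - 1)) _ 0 :=
    hA.pow (n - 1)
  have hB : HasDerivAt (fun x : ℝ => deriv u x + x * deriv (deriv u) x)
      (deriv (deriv u) 0 + (1 * deriv (deriv u) 0 + 0 * deriv (deriv (deriv u)) 0)) 0 :=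
    hvd.hasDerivAt.add ((hasDerivAt_id (0:ℝ)).mul hwd.hasDerivAt)
  have hg : deriv (fun x : ℝ => (1 + k₀ * (x * deriv u x)) ^ (n - 1) *
      (deriv u x + x * deriv (deriv u) x)) 0 = _ := (hApow.mul hB).deriv
  rw [hode'.deriv_eq, deriv_const] at hg
  set b := deriv (deriv u) 0 with hb
  simp only [mul_zero, zero_mul, add_zero, zero_add, one_pow, one_mul, mul_one, h0] at hg
  -- key identity : (n-1) * k₀ * c^2 + 2 * b = 0
  have key : ((n - 1 : ℕ) : ℝ) * k₀ * c ^ 2 + 2 * b = 0 := by nlinarith [hg]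
  obtain ⟨m, hm, rfl⟩ := hk
  have hn1 : (1 : ℝ) ≤ ((n - 1 : ℕ) : ℝ) := by
    exact_mod_cast Nat.one_le_iff_ne_zero.mpr (by omega)
  have hm1 : (1 : ℝ) ≤ (m : ℝ) := by exact_mod_cast hm
  rw [h0, h2, ← hb]
  have hprod : (1 : ℝ) ≤ ((n - 1 : ℕ) : ℝ) * (m : ℝ) := by nlinarith
  have hcc := mul_le_mul_of_nonneg_right hprod (sq_nonneg c)
  constructor
  · nlinarith [key, hcc]
  · constructor
    · intro hzero
      have h3 : ((n - 1 : ℕ) : ℝ) * (m : ℝ) * c ^ 2 = 1 * c ^ 2 := by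
        linear_combination (1 / 2) * key - 2 * hzero
      have hnm : ((n - 1 : ℕ) : ℝ) * (m : ℝ) = 1 :=
        mul_right_cancel₀ (ne_of_gt (pow_pos hc 2)) h3
      have hnm' : (n - 1) * m = 1 := by exact_mod_cast hnm
      have hle1 : n - 1 ≤ 1 := Nat.le_of_dvd one_pos ⟨m, hnm'.symm⟩
      have hle2 : m ≤ 1 := Nat.le_of_dvd one_pos ⟨n - 1, by rw [mul_comm]; exact hnm'.symm⟩
      have hm' : m = 1 := by omega
      exact ⟨by omega, by rw [hm']; norm_num⟩
    · rintro ⟨rfl, hk2⟩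
      have hm' : (m : ℝ) = 1 := by linarith
      rw [show ((2 : ℕ) - 1 : ℕ) = 1 from rfl] at key
      simp only [hm', Nat.cast_one] at key
      linarith [key]
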